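/- arXiv:math/0211132 — 6 statements merged into one kernel-verified Lean document; each statement's English description precedes it below -/
import Mathlib

section
/- Let P be a monic hyperbolic real polynomial of degree n, let 1 ≤ k ≤ n−1, let x₁ ≤ … ≤ xₙ be the roots of P listed in increasing order with multiplicity, and let ξ₁ ≤ … ≤ ξ_{n−k} be the roots of P^{(k)} listed in increasing order with multiplicity. Then for every i with 1 ≤ i ≤ n−k one has x_i ≤ ξ_i ≤ x_{i+k}. -/
/-!
Rolle's theorem localises: on an order-convex set `s ⊆ ℝ`, a root of `p` of multiplicity `m` is a
root of `p'` of multiplicity `m - 1`, and between two consecutive distinct roots of `p` in `s` lies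
a further root of `p'` in `s`. Hence `p` has at most one root more in `s` than `p'`, and at most
`k` more than `p⁽ᵏ⁾`. If `ξᵢ < xᵢ`, then `P` has at least `n - i` roots in `(ξᵢ, ∞)` while `P⁽ᵏ⁾`
has at most `n - k - i - 1` there; symmetrically `x_{i+k} < ξᵢ` is impossible by counting in
`(-∞, ξᵢ)`.
-/

open Polynomial Finset

namespace Polynomial

variable {s : Set ℝ} [DecidablePred (· ∈ s)]

theorem card_roots_toFinset_filter_le_card_roots_derivative_sdiff_roots_succ (p : ℝ[X])
    (hs : s.OrdConnected) :
    (p.roots.toFinset.filter (· ∈ s)).card ≤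
      (p.derivative.roots.toFinset.filter (· ∈ s) \ p.roots.toFinset.filter (· ∈ s)).card + 1 := by
  rcases eq_or_ne (derivative p) 0 with hp' | hp'
  · rw [eq_C_of_derivative_eq_zero hp']
    simp
  have hp : p ≠ 0 := ne_of_apply_ne derivative (by rwa [derivative_zero])
  refine Finset.card_le_sdiff_of_interleaved fun x hx y hy hxy _ => ?_
  rw [Finset.mem_filter, Multiset.mem_toFinset, mem_roots hp] at hx hy
  obtain ⟨z, hz, hz'⟩ := exists_deriv_eq_zero hxy p.continuousOn (hx.1.trans hy.1.symm)
  refine ⟨z, ?_, hz⟩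
  rw [Finset.mem_filter, Multiset.mem_toFinset, mem_roots hp', IsRoot, ← p.deriv]
  exact ⟨hz', hs.out hx.2 hy.2 (Set.Ioo_subset_Icc_self hz)⟩

theorem card_roots_filter_le_derivative (p : ℝ[X]) (hs : s.OrdConnected) :
    Multiset.card (p.roots.filter (· ∈ s)) ≤
      Multiset.card (p.derivative.roots.filter (· ∈ s)) + 1 := by
  set R := p.roots.toFinset.filter (· ∈ s)
  set T := p.derivative.roots.toFinset.filter (· ∈ s)
  have hR : ∀ x ∈ R, x ∈ s := fun x hx => (Finset.mem_filter.1 hx).2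
  have hRT : ∀ x ∈ R ∪ T, x ∈ s := by
    intro x hx
    rcases Finset.mem_union.1 hx with hx | hx <;> exact (Finset.mem_filter.1 hx).2
  calc Multiset.card (p.roots.filter (· ∈ s))
      = ∑ x ∈ R, p.roots.count x := by
        rw [← Multiset.sum_count_eq_card (s := R) (by simp [R])]
        exact Finset.sum_congr rfl fun x hx => Multiset.count_filter_of_pos (hR x hx)
    _ = ∑ x ∈ R, (p.rootMultiplicity x - 1) + R.card := by
        rw [Finset.card_eq_sum_ones, ← Finset.sum_add_distrib]
        refine Finset.sum_congr rfl fun x hx => ?_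
        have : 0 < p.roots.count x :=
          Multiset.count_pos.2 (by simpa [R] using (Finset.mem_filter.1 hx).1)
        rw [count_roots] at this ⊢
        omega
    _ ≤ ∑ x ∈ R, p.derivative.roots.count x + ((T \ R).card + 1) := by
        gcongr with x
        · rw [count_roots]
          exact rootMultiplicity_sub_one_le_derivative_rootMultiplicity _ _
        · exact p.card_roots_toFinset_filter_le_card_roots_derivative_sdiff_roots_succ hs
    _ ≤ ∑ x ∈ R, p.derivative.roots.count x + (∑ x ∈ T \ R, p.derivative.roots.count x + 1) := by
        rw [Finset.card_eq_sum_ones]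
        gcongr with x hx
        exact Multiset.one_le_count_iff_mem.2
          (Multiset.mem_toFinset.1 (Finset.mem_filter.1 (Finset.mem_sdiff.1 hx).1).1)
    _ = ∑ x ∈ R ∪ T, (p.derivative.roots.filter (· ∈ s)).count x + 1 := by
        rw [← add_assoc, ← Finset.sum_union Finset.disjoint_sdiff, Finset.union_sdiff_self_eq_union]
        exact congrArg (· + 1) (Finset.sum_congr rfl fun x hx =>
          (Multiset.count_filter_of_pos (hRT x hx)).symm)
    _ = Multiset.card (p.derivative.roots.filter (· ∈ s)) + 1 := by
        rw [Multiset.sum_count_eq_card]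
        intro x hx
        rw [Multiset.mem_filter] at hx
        exact Finset.mem_union_right _ (Finset.mem_filter.2 ⟨Multiset.mem_toFinset.2 hx.1, hx.2⟩)

theorem card_roots_filter_le_iterate_derivative (p : ℝ[X]) (hs : s.OrdConnected) (k : ℕ) :
    Multiset.card (p.roots.filter (· ∈ s)) ≤
      Multiset.card ((derivative^[k] p).roots.filter (· ∈ s)) + k := by
  induction k with
  | zero => simp
  | succ k ih =>
    rw [Function.iterate_succ_apply']
    have := (derivative^[k] p).card_roots_filter_le_derivative hs
    omega

theorem natDegree_iterate_derivative_eq {R : Type*} [Semiring R] [IsAddTorsionFree R]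
    (p : R[X]) (k : ℕ) : (derivative^[k] p).natDegree = p.natDegree - k := by
  induction k with
  | zero => rfl
  | succ k ih => rw [Function.iterate_succ_apply', natDegree_derivative, ih, Nat.sub_sub]

theorem roots_prod_X_sub_C_eq_map {R ι : Type*} [CommRing R] [IsDomain R] (s : Finset ι)
    (f : ι → R) : (∏ i ∈ s, (X - C (f i))).roots = s.val.map f := by
  rw [Finset.prod_eq_multiset_prod, ← roots_multiset_prod_X_sub_C (s.val.map f), Multiset.map_map]
  rfl

end Polynomial

section Interlacing

variable {α : Type*} [LinearOrder α] {n k : ℕ} {x : Fin n → α} {ξ : Fin (n - k) → α}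

theorem Monotone.le_of_card_filter_lt_le_add (hx : Monotone x) (hξ : Monotone ξ)
    (h : ∀ t, #{j | t < x j} ≤ #{j | t < ξ j} + k) (i : Fin (n - k)) :
    x ⟨i, by omega⟩ ≤ ξ i := by
  by_contra! hlt
  have hxcard : n - i ≤ #{j | ξ i < x j} := by
    rw [← Fin.card_Ici (⟨i, by omega⟩ : Fin n)]
    exact Finset.card_le_card fun j hj => Finset.mem_filter.2
      ⟨Finset.mem_univ _, hlt.trans_le (hx (Finset.mem_Ici.1 hj))⟩
  have hξcard : #{j | ξ i < ξ j} ≤ n - k - 1 - i := by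
    rw [← Fin.card_Ioi]
    exact Finset.card_le_card fun j hj =>
      Finset.mem_Ioi.2 (hξ.reflect_lt (Finset.mem_filter.1 hj).2)
  have := h (ξ i)
  omega

theorem Monotone.le_of_card_filter_gt_le_add (hx : Monotone x) (hξ : Monotone ξ)
    (h : ∀ t, #{j | x j < t} ≤ #{j | ξ j < t} + k) (i : Fin (n - k)) :
    ξ i ≤ x ⟨i + k, by omega⟩ := by
  by_contra! hlt
  have hxcard : i + k + 1 ≤ #{j | x j < ξ i} := by
    rw [← Fin.card_Iic (⟨i + k, by omega⟩ : Fin n)]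
    exact Finset.card_le_card fun j hj => Finset.mem_filter.2
      ⟨Finset.mem_univ _, (hx (Finset.mem_Iic.1 hj)).trans_lt hlt⟩
  have hξcard : #{j | ξ j < ξ i} ≤ i := by
    rw [← Fin.card_Iio i]
    exact Finset.card_le_card fun j hj =>
      Finset.mem_Iio.2 (hξ.reflect_lt (Finset.mem_filter.1 hj).2)
  have := h (ξ i)
  omega

end Interlacing

/-- Rolle interlacing: if `P` is a monic hyperbolic real polynomial of degree `n`
with roots `x 0 ≤ … ≤ x (n-1)` (listed in increasing order with multiplicity),
`1 ≤ k ≤ n - 1`, and `ξ 0 ≤ … ≤ ξ (n-k-1)` are the roots of `P^{(k)}` listed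
in increasing order with multiplicity, then `x i ≤ ξ i ≤ x (i+k)` for all `i`. -/
theorem roots_of_derivative_interlace
    (n k : ℕ)
    (x : Fin n → ℝ) (hx : Monotone x)
    (P : Polynomial ℝ) (hP : P = ∏ i, (X - C (x i)))
    (ξ : Fin (n - k) → ℝ) (hξ : Monotone ξ)
    (hfac : Polynomial.derivative^[k] P =
      C ((Polynomial.derivative^[k] P).leadingCoeff) * ∏ i, (X - C (ξ i))) :
    ∀ i : Fin (n - k),
      x ⟨i.1, by have := i.isLt; omega⟩ ≤ ξ i ∧
      ξ i ≤ x ⟨i.1 + k, by have := i.isLt; omega⟩ := by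
  classical
  intro i
  have hPk : derivative^[k] P ≠ 0 := by
    refine ne_zero_of_natDegree_gt (n := 0) ?_
    rw [natDegree_iterate_derivative_eq, hP, natDegree_finsetProd_X_sub_C_eq_card, Finset.card_univ,
      Fintype.card_fin]
    exact i.pos
  have hrootsPk : (derivative^[k] P).roots = Finset.univ.val.map ξ := by
    rw [hfac, roots_C_mul _ (leadingCoeff_ne_zero.2 hPk), roots_prod_X_sub_C_eq_map]
  have hcount (s : Set ℝ) (hs : s.OrdConnected) : #{j | x j ∈ s} ≤ #{j | ξ j ∈ s} + k := by
    have := P.card_roots_filter_le_iterate_derivative hs k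
    rwa [hrootsPk, hP, roots_prod_X_sub_C_eq_map, Multiset.filter_map, Multiset.filter_map,
      Multiset.card_map, Multiset.card_map] at this
  exact ⟨hx.le_of_card_filter_lt_le_add hξ (fun t => hcount (Set.Ioi t) Set.ordConnected_Ioi) i,
    hx.le_of_card_filter_gt_le_add hξ (fun t => hcount (Set.Iio t) Set.ordConnected_Iio) i⟩
end

section
/- Let P be a monic strictly hyperbolic real polynomial of degree n ≥ 2 (P has n distinct real roots), and let ξ ∈ ℝ satisfy P'(ξ) = 0. Then P(ξ)·P''(ξ) < 0, i.e. P(ξ) and P''(ξ) are nonzero and have opposite signs. -/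
open Polynomial


private lemma polyDerivativeFinsetProd {ι : Type*} [DecidableEq ι] (s : Finset ι) (f : ι → Polynomial ℝ) :
    Polynomial.derivative (∏ i ∈ s, f i)
      = ∑ i ∈ s, (∏ j ∈ s.erase i, f j) * Polynomial.derivative (f i) := by
  rw [Finset.prod, derivative_prod, Finset.sum]
  congr 1

/-- If `P` is a monic strictly hyperbolic real polynomial of degree `n ≥ 2`
(it has `n` distinct real roots) and `ξ` is a critical point of `P` (`P'(ξ) = 0`),
then `P(ξ) · P''(ξ) < 0`: in particular `P(ξ)` and `P''(ξ)` are nonzero and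
have opposite signs. -/
theorem strictly_hyperbolic_opposite_signs_at_critical_point
    (n : ℕ) (hn : 2 ≤ n) (P : Polynomial ℝ)
    (hmonic : P.Monic) (hdeg : P.natDegree = n)
    (hroots : P.roots.card = n) (hnodup : P.roots.Nodup)
    (ξ : ℝ) (hcrit : (Polynomial.derivative P).eval ξ = 0) :
    P.eval ξ * (Polynomial.derivative (Polynomial.derivative P)).eval ξ < 0 := by
  classical
  set s : Finset ℝ := P.roots.toFinset with hs
  have hval : s.val = P.roots := by
    rw [hs, Multiset.toFinset_val, Multiset.dedup_eq_self.mpr hnodup]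
  have hProd : (P.roots.map fun a => X - C a).prod = P :=
    prod_multiset_X_sub_C_of_monic_of_roots_card_eq hmonic (by rw [hdeg]; exact hroots)
  have hP : P = ∏ r ∈ s, (X - C r) := by
    rw [← hProd, Finset.prod, hval]
  have hcard : s.card = n := by
    rw [hs, Multiset.toFinset_card_of_nodup hnodup, hroots]
  have hsne : s.Nonempty := Finset.card_pos.mp (by omega)
  -- first derivative
  have hd1 : Polynomial.derivative P = ∑ i ∈ s, ∏ j ∈ s.erase i, (X - C j) := by
    rw [hP, polyDerivativeFinsetProd]
    simp [derivative_X_sub_C]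
  have hd1e : (0:ℝ) = ∑ i ∈ s, ∏ j ∈ s.erase i, (ξ - j) := by
    rw [← hcrit, hd1]
    simp [eval_finset_sum, eval_prod]
  -- P(ξ) ≠ 0
  have hpe : P.eval ξ = ∏ i ∈ s, (ξ - i) := by
    rw [hP]; simp [eval_prod]
  have hne : P.eval ξ ≠ 0 := by
    intro h
    rw [hpe] at h
    obtain ⟨r, hr, hr0⟩ := Finset.prod_eq_zero_iff.mp h
    have hsum : ∑ i ∈ s, ∏ j ∈ s.erase i, (ξ - j) = ∏ j ∈ s.erase r, (ξ - j) := by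
      refine Finset.sum_eq_single_of_mem r hr ?_
      intro i hi hir
      exact Finset.prod_eq_zero (Finset.mem_erase.mpr ⟨fun h' => hir (h' ▸ rfl), hr⟩) hr0
    rw [hsum] at hd1e
    have : ∀ j ∈ s.erase r, ξ - j ≠ 0 := by
      intro j hj
      have hjr : j ≠ r := (Finset.mem_erase.mp hj).1
      have : ξ = r := by linarith [sub_eq_zero.mp hr0]
      intro h0
      exact hjr (by linarith [sub_eq_zero.mp h0])
    exact (Finset.prod_ne_zero_iff.mpr this) hd1e.symm
  have hc : ∀ i ∈ s, ξ - i ≠ 0 := by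
    intro i hi h0
    exact hne (hpe ▸ Finset.prod_eq_zero hi h0)
  set p : ℝ := P.eval ξ with hpdef
  -- erase products
  have hEr : ∀ i ∈ s, ∏ j ∈ s.erase i, (ξ - j) = p * (ξ - i)⁻¹ := by
    intro i hi
    have h : (∏ j ∈ s.erase i, (ξ - j)) * (ξ - i) = ∏ j ∈ s, (ξ - j) :=
      Finset.prod_erase_mul s (fun j => ξ - j) hi
    rw [hpe, ← h, mul_assoc, mul_inv_cancel₀ (hc i hi), mul_one]
  -- sum of inverses is zero
  have hS : ∑ i ∈ s, (ξ - i)⁻¹ = 0 := by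
    have : (0:ℝ) = p * ∑ i ∈ s, (ξ - i)⁻¹ := by
      rw [hd1e, Finset.mul_sum]
      exact Finset.sum_congr rfl hEr
    rcases mul_eq_zero.mp this.symm with h | h
    · exact absurd h hne
    · exact h
  -- second derivative
  have hd2 : (Polynomial.derivative (Polynomial.derivative P)).eval ξ
      = ∑ i ∈ s, ∑ j ∈ s.erase i, ∏ k ∈ (s.erase i).erase j, (ξ - k) := by
    rw [hd1, map_sum]
    rw [eval_finset_sum]
    refine Finset.sum_congr rfl ?_
    intro i hi
    rw [polyDerivativeFinsetProd]
    simp [derivative_X_sub_C, eval_finset_sum, eval_prod]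
  -- inner products
  have hEr2 : ∀ i ∈ s, ∀ j ∈ s.erase i, ∏ k ∈ (s.erase i).erase j, (ξ - k)
      = p * (ξ - i)⁻¹ * (ξ - j)⁻¹ := by
    intro i hi j hj
    have hjs : j ∈ s := Finset.mem_of_mem_erase hj
    have h : (∏ k ∈ (s.erase i).erase j, (ξ - k)) * (ξ - j) = ∏ k ∈ s.erase i, (ξ - k) :=
      Finset.prod_erase_mul (s.erase i) (fun k => ξ - k) hj
    rw [hEr i hi] at h
    calc ∏ k ∈ (s.erase i).erase j, (ξ - k)
        = (∏ k ∈ (s.erase i).erase j, (ξ - k)) * (ξ - j) * (ξ - j)⁻¹ := by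
          rw [mul_assoc, mul_inv_cancel₀ (hc j hjs), mul_one]
      _ = p * (ξ - i)⁻¹ * (ξ - j)⁻¹ := by rw [h]
  set Q : ℝ := ∑ i ∈ s, ((ξ - i)⁻¹)^2 with hQdef
  have hd2v : (Polynomial.derivative (Polynomial.derivative P)).eval ξ = -p * Q := by
    rw [hd2]
    have : ∀ i ∈ s, ∑ j ∈ s.erase i, ∏ k ∈ (s.erase i).erase j, (ξ - k)
        = -p * ((ξ - i)⁻¹)^2 := by
      intro i hi
      rw [Finset.sum_congr rfl (hEr2 i hi)]
      rw [← Finset.mul_sum, Finset.sum_erase_eq_sub hi, hS]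
      ring
    rw [Finset.sum_congr rfl this, ← Finset.mul_sum]
  have hQpos : 0 < Q := by
    refine Finset.sum_pos ?_ hsne
    intro i hi
    exact pow_pos (abs_pos.mpr (inv_ne_zero (hc i hi))) 2 |>.trans_le (by rw [sq_abs])
  rw [hd2v]
  have hp2 : 0 < p ^ 2 := pow_pos (abs_pos.mpr hne) 2 |>.trans_le (by rw [sq_abs])
  nlinarith
end

section
/- Let P be a monic hyperbolic real polynomial of degree n ≥ 2 (P has n real roots counted with multiplicity), and let ξ ∈ ℝ satisfy P'(ξ) = 0 and P(ξ) ≠ 0. Then P(ξ)·P''(ξ) < 0, i.e. P''(ξ) ≠ 0 and P(ξ) and P''(ξ) have opposite signs. -/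
open Polynomial

private lemma aux_deriv (x : ℝ) (s : Multiset ℝ) (hx : ∀ r ∈ s, x - r ≠ 0) :
    eval x (derivative ((s.map fun a => X - C a).prod)) =
      eval x ((s.map fun a => X - C a).prod) * (s.map fun r => (x - r)⁻¹).sum ∧
    eval x (derivative (derivative ((s.map fun a => X - C a).prod))) =
      eval x ((s.map fun a => X - C a).prod) *
        (((s.map fun r => (x - r)⁻¹).sum) ^ 2 - (s.map fun r => ((x - r)⁻¹) ^ 2).sum) := by
  induction s using Multiset.induction with
  | empty => simp
  | cons a t ih =>
    have ha : x - a ≠ 0 := hx a (Multiset.mem_cons_self a t)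
    have ht : ∀ r ∈ t, x - r ≠ 0 := fun r hr => hx r (Multiset.mem_cons_of_mem hr)
    obtain ⟨ih1, ih2⟩ := ih ht
    simp only [Multiset.map_cons, Multiset.prod_cons, Multiset.sum_cons, derivative_mul,
      derivative_sub, derivative_X, derivative_C, sub_zero, eval_mul, eval_add, eval_one,
      eval_sub, eval_X, eval_C, one_mul, mul_one, derivative_add, derivative_one, zero_mul,
      add_zero, zero_add] at *
    constructor
    · rw [ih1]; field_simp
    · rw [ih1, ih2]; field_simp; ring

/-- If `P` is a monic hyperbolic real polynomial of degree `n ≥ 2` (it has `n` real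
roots counted with multiplicity) and `ξ` is a critical point of `P` (`P'(ξ) = 0`)
which is not a root of `P`, then `P(ξ) · P''(ξ) < 0`: in particular `P''(ξ) ≠ 0`
and `P(ξ)` and `P''(ξ)` have opposite signs. -/
theorem hyperbolic_opposite_signs_at_noncritical_root
    (n : ℕ) (hn : 2 ≤ n) (P : Polynomial ℝ)
    (hmonic : P.Monic) (hdeg : P.natDegree = n)
    (hroots : P.roots.card = n)
    (ξ : ℝ) (hcrit : (Polynomial.derivative P).eval ξ = 0)
    (hne : P.eval ξ ≠ 0) :
    P.eval ξ * (Polynomial.derivative (Polynomial.derivative P)).eval ξ < 0 := by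
  have hP : (P.roots.map fun a => X - C a).prod = P :=
    prod_multiset_X_sub_C_of_monic_of_roots_card_eq hmonic (hroots.trans hdeg.symm)
  have hx : ∀ r ∈ P.roots, ξ - r ≠ 0 := by
    intro r hr h
    have : ξ = r := by linarith [sub_eq_zero.mp h]
    exact hne (this ▸ (isRoot_of_mem_roots hr))
  obtain ⟨h1, h2⟩ := aux_deriv ξ P.roots hx
  rw [hP] at h1 h2
  have hS1 : (P.roots.map fun r => (ξ - r)⁻¹).sum = 0 := by
    rcases mul_eq_zero.mp (h1 ▸ hcrit) with h | h
    · exact absurd h hne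
    · exact h
  have hs0 : P.roots ≠ 0 := by
    intro h; rw [h] at hroots; simp at hroots; omega
  have hS2 : 0 < (P.roots.map fun r => ((ξ - r)⁻¹) ^ 2).sum := by
    obtain ⟨a, ha⟩ := Multiset.exists_mem_of_ne_zero hs0
    obtain ⟨t, heq⟩ := Multiset.exists_cons_of_mem ha
    rw [heq, Multiset.map_cons, Multiset.sum_cons]
    have h1' : (0:ℝ) < ((ξ - a)⁻¹) ^ 2 := by
      have := hx a ha; positivity
    have h2' : (0:ℝ) ≤ (Multiset.map (fun r => ((ξ - r)⁻¹) ^ 2) t).sum := by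
      apply Multiset.sum_nonneg
      intro y hy
      obtain ⟨r, hr, rfl⟩ := Multiset.mem_map.mp hy
      have := hx r (heq ▸ Multiset.mem_cons_of_mem hr)
      positivity
    linarith
  rw [h2, hS1]
  have he : 0 < P.eval ξ * P.eval ξ := mul_self_pos.mpr hne
  nlinarith
end

section
/- Let n ≥ 2, let Q be a monic strictly hyperbolic real polynomial of degree n−1, and let c₀ ∈ ℝ be such that P := (X − c₀)·Q is strictly hyperbolic (i.e. c₀ is not a root of Q), and let ξ₀ ∈ ℝ satisfy P'(ξ₀) = 0. Suppose f : ℝ → ℝ is differentiable at c₀, f(c₀) = ξ₀, and for all c in some neighborhood of c₀ the polynomial ((X − c)·Q)' vanishes at f(c). Then P''(ξ₀) ≠ 0, ξ₀ ≠ c₀, and f'(c₀) = Q'(ξ₀)/P''(ξ₀) = −P(ξ₀)/((ξ₀ − c₀)²·P''(ξ₀)) > 0. -/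
/-!
For `W(p) = p'² - p p''` one has `W(p q) = q² W(p) + p² W(q)`, with `W = 0` on constants and
`W = 1` on linear factors. Hence `W(p) ≥ 0` for a real-rooted `p`, strictly where `p` does not
vanish, while at a simple root `W(p) = p'² > 0`. At the critical point `ξ₀` of the squarefree
`P` this is Laguerre's inequality `P(ξ₀) P''(ξ₀) = -W(P)(ξ₀) < 0`.

Differentiating `Q(f c) + (f c - c) Q'(f c) = 0` at `c₀` gives `f'(c₀) P''(ξ₀) = Q'(ξ₀)`, and
`P'(ξ₀) = 0` gives `P(ξ₀) = -(ξ₀ - c₀)² Q'(ξ₀)`; so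
`f'(c₀) = -P(ξ₀) P''(ξ₀) / ((ξ₀ - c₀)² P''(ξ₀)²) > 0`.
-/

open Polynomial

namespace Polynomial

section Laguerre

variable {R : Type*} [CommRing R]

noncomputable def laguerreForm (p : R[X]) : R[X] :=
  derivative p ^ 2 - p * derivative (derivative p)

theorem laguerreForm_mul (p q : R[X]) :
    laguerreForm (p * q) = q ^ 2 * laguerreForm p + p ^ 2 * laguerreForm q := by
  simp only [laguerreForm, derivative_mul, derivative_add]
  ring

@[simp]
theorem laguerreForm_C (a : R) : laguerreForm (C a) = 0 := by
  simp [laguerreForm]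

@[simp]
theorem laguerreForm_X_add_C (a : R) : laguerreForm (X + C a) = 1 := by
  simp [laguerreForm]

@[simp]
theorem laguerreForm_X_sub_C (a : R) : laguerreForm (X - C a) = 1 := by
  simp [laguerreForm]

variable [LinearOrder R] [IsStrictOrderedRing R]

theorem Splits.eval_laguerreForm_nonneg {p : R[X]} (hp : p.Splits) (x : R) :
    0 ≤ (laguerreForm p).eval x := by
  induction hp using Submonoid.closure_induction with
  | mem p hp =>
    obtain ⟨a, rfl⟩ | ⟨a, rfl⟩ := hp <;> simp
  | one => simp [laguerreForm]
  | mul p q _ _ hp hq =>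
    rw [laguerreForm_mul, eval_add, eval_mul, eval_mul, eval_pow, eval_pow]
    exact add_nonneg (mul_nonneg (sq_nonneg _) hp) (mul_nonneg (sq_nonneg _) hq)

theorem Splits.eval_laguerreForm_pos {p : R[X]} (hp : p.Splits) (hdeg : 0 < p.natDegree)
    {x : R} (hx : p.eval x ≠ 0) : 0 < (laguerreForm p).eval x := by
  obtain ⟨a, ha⟩ := hp.exists_eval_eq_zero (degree_ne_of_natDegree_ne hdeg.ne')
  set q := p /ₘ (X - C a)
  have hpq : (X - C a) * q = p := mul_divByMonic_eq_iff_isRoot.2 ha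
  have hq : q.Splits := splits_X_sub_C_mul_iff.1 (hpq ▸ hp)
  have hqx : q.eval x ≠ 0 := by
    intro h
    exact hx (by rw [← hpq, eval_mul, h, mul_zero])
  rw [← hpq, laguerreForm_mul, laguerreForm_X_sub_C, eval_add, eval_mul, eval_mul, eval_one,
    mul_one, eval_pow, eval_pow]
  exact add_pos_of_pos_of_nonneg (sq_pos_of_ne_zero hqx)
    (mul_nonneg (sq_nonneg _) (hq.eval_laguerreForm_nonneg x))

theorem Splits.eval_laguerreForm_pos_of_separable {p : R[X]} (hp : p.Splits)
    (hsep : p.Separable) (hdeg : 0 < p.natDegree) (x : R) : 0 < (laguerreForm p).eval x := by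
  by_cases hx : p.eval x = 0
  · have hx' := hsep.eval₂_derivative_ne_zero (RingHom.id R) hx
    simp only [laguerreForm, eval_sub, eval_pow, eval_mul, eval₂_id] at hx' ⊢
    rw [hx, zero_mul, sub_zero]
    positivity
  · exact hp.eval_laguerreForm_pos hdeg hx

theorem Splits.eval_mul_eval_derivative_derivative_neg {p : R[X]} (hp : p.Splits)
    (hsep : p.Separable) (hdeg : 0 < p.natDegree) {x : R} (hx : (derivative p).eval x = 0) :
    p.eval x * (derivative (derivative p)).eval x < 0 := by
  have := hp.eval_laguerreForm_pos_of_separable hsep hdeg x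
  simpa [laguerreForm, hx] using this

end Laguerre

theorem Splits.separable_X_sub_C_mul {F : Type*} [Field F] {Q : F[X]} (hQ : Q.Splits)
    (hnodup : Q.roots.Nodup) {c : F} (hc : Q.eval c ≠ 0) : ((X - C c) * Q).Separable := by
  have hQ0 : Q ≠ 0 := by rintro rfl; simp at hc
  have hP0 : (X - C c) * Q ≠ 0 := mul_ne_zero (X_sub_C_ne_zero c) hQ0
  refine (nodup_roots_iff_of_splits hP0 ((Splits.X_sub_C c).mul hQ)).1 ?_
  rw [roots_mul hP0, roots_X_sub_C, Multiset.singleton_add]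
  exact Multiset.nodup_cons.2 ⟨fun h => hc (isRoot_of_mem_roots h), hnodup⟩

section CriticalPoint

variable {R : Type*} [CommRing R]

theorem eval_derivative_X_sub_C_mul (Q : R[X]) (c x : R) :
    (derivative ((X - C c) * Q)).eval x = Q.eval x + (x - c) * (derivative Q).eval x := by
  simp [derivative_mul]

theorem eval_derivative_derivative_X_sub_C_mul (Q : R[X]) (c x : R) :
    (derivative (derivative ((X - C c) * Q))).eval x
      = 2 * (derivative Q).eval x + (x - c) * (derivative (derivative Q)).eval x := by
  simp only [derivative_mul, derivative_sub, derivative_X, derivative_C, sub_zero, one_mul,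
    derivative_add, eval_add, eval_mul, eval_sub, eval_X, eval_C]
  ring

theorem HasDerivAt.mul_eval_derivative_derivative_X_sub_C_mul {𝕜 : Type*}
    [NontriviallyNormedField 𝕜] {Q : 𝕜[X]} {f : 𝕜 → 𝕜} {f' c₀ : 𝕜} (hf : HasDerivAt f f' c₀)
    (htrack : ∀ᶠ c in nhds c₀, (derivative ((X - C c) * Q)).eval (f c) = 0) :
    f' * (derivative (derivative ((X - C c₀) * Q))).eval (f c₀) = (derivative Q).eval (f c₀) := by
  have hF : HasDerivAt (fun c => Q.eval (f c) + (f c - c) * (derivative Q).eval (f c))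
      ((derivative Q).eval (f c₀) * f' + ((f' - 1) * (derivative Q).eval (f c₀)
        + (f c₀ - c₀) * ((derivative (derivative Q)).eval (f c₀) * f'))) c₀ :=
    ((Q.hasDerivAt _).comp c₀ hf).add
      ((hf.sub (hasDerivAt_id c₀)).mul (((derivative Q).hasDerivAt _).comp c₀ hf))
  have hF0 : (fun c => Q.eval (f c) + (f c - c) * (derivative Q).eval (f c)) =ᶠ[nhds c₀]
      fun _ => 0 := by
    filter_upwards [htrack] with c hc
    rwa [eval_derivative_X_sub_C_mul] at hc
  have := hF.unique ((hasDerivAt_const c₀ (0 : 𝕜)).congr_of_eventuallyEq hF0)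
  rw [eval_derivative_derivative_X_sub_C_mul]
  linear_combination this

end CriticalPoint

end Polynomial

theorem deriv_of_root_of_derivative_wrt_simple_root_general
    (n : ℕ) (Q : Polynomial ℝ)
    (hQdeg : Q.natDegree = n - 1)
    (hQroots : Q.roots.card = n - 1) (hQnodup : Q.roots.Nodup)
    (c₀ : ℝ) (hc₀ : Q.eval c₀ ≠ 0)
    (P : Polynomial ℝ) (hPdef : P = (X - C c₀) * Q)
    (ξ₀ : ℝ) (hξ₀ : (Polynomial.derivative P).eval ξ₀ = 0)
    (f : ℝ → ℝ) (hf : DifferentiableAt ℝ f c₀) (hfc₀ : f c₀ = ξ₀)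
    (hftrack : ∀ᶠ c in nhds c₀,
      (Polynomial.derivative ((X - C c) * Q)).eval (f c) = 0) :
    (Polynomial.derivative (Polynomial.derivative P)).eval ξ₀ ≠ 0 ∧
    ξ₀ ≠ c₀ ∧
    deriv f c₀ = (Polynomial.derivative Q).eval ξ₀ /
      (Polynomial.derivative (Polynomial.derivative P)).eval ξ₀ ∧
    deriv f c₀ = -P.eval ξ₀ /
      ((ξ₀ - c₀) ^ 2 * (Polynomial.derivative (Polynomial.derivative P)).eval ξ₀) ∧
    0 < deriv f c₀ := by
  have hQ : Q.Splits := splits_iff_card_roots.2 (hQroots.trans hQdeg.symm)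
  have hPsplits : P.Splits := hPdef ▸ (Splits.X_sub_C c₀).mul hQ
  have hPsep : P.Separable := hPdef ▸ hQ.separable_X_sub_C_mul hQnodup hc₀
  have hPdeg : 0 < P.natDegree := natDegree_pos_iff_degree_pos.2 <|
    degree_pos_of_root (a := c₀) hPsep.ne_zero (by simp [hPdef])
  have hsign := hPsplits.eval_mul_eval_derivative_derivative_neg hPsep hPdeg hξ₀
  have hP'' : (derivative (derivative P)).eval ξ₀ ≠ 0 := by
    rintro h; simp [h] at hsign
  have hne : ξ₀ ≠ c₀ := by
    rintro rfl; simp [hPdef] at hsign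
  have hξc : ξ₀ - c₀ ≠ 0 := sub_ne_zero.2 hne
  have hkey : deriv f c₀ * (derivative (derivative P)).eval ξ₀ = (derivative Q).eval ξ₀ := by
    rw [← hfc₀, hPdef]
    exact hf.hasDerivAt.mul_eval_derivative_derivative_X_sub_C_mul hftrack
  have hPξ : P.eval ξ₀ = -((ξ₀ - c₀) ^ 2 * (derivative Q).eval ξ₀) := by
    rw [hPdef, eval_derivative_X_sub_C_mul] at hξ₀
    rw [hPdef, eval_mul, eval_sub, eval_X, eval_C]
    linear_combination (ξ₀ - c₀) * hξ₀
  have hderiv : deriv f c₀ = (derivative Q).eval ξ₀ / (derivative (derivative P)).eval ξ₀ :=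
    eq_div_of_mul_eq hP'' hkey
  refine ⟨hP'', hne, hderiv, ?_, ?_⟩
  · rw [hderiv, hPξ]
    field_simp [hξc]
  · have : deriv f c₀ = -(P.eval ξ₀ * (derivative (derivative P)).eval ξ₀) /
        ((ξ₀ - c₀) ^ 2 * (derivative (derivative P)).eval ξ₀ ^ 2) := by
      rw [hderiv, hPξ]
      field_simp [hξc]
    rw [this]
    exact div_pos (neg_pos.2 hsign) (by positivity)

/-- Let `Q` be a monic strictly hyperbolic real polynomial of degree `n - 1` (with
`n ≥ 2`), let `c₀` not be a root of `Q` (so that `P := (X - c₀) * Q` is strictly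
hyperbolic of degree `n`), and let `ξ₀` be a critical point of `P`. If `f` is a
function, differentiable at `c₀` with `f c₀ = ξ₀`, which tracks a root of the
derivative of `(X - c) * Q` as `c` varies near `c₀`, then `P''(ξ₀) ≠ 0`,
`ξ₀ ≠ c₀`, and `f'(c₀) = Q'(ξ₀)/P''(ξ₀) = -P(ξ₀)/((ξ₀ - c₀)² P''(ξ₀)) > 0`. -/
theorem deriv_of_root_of_derivative_wrt_simple_root
    (n : ℕ) (hn : 2 ≤ n) (Q : Polynomial ℝ)
    (hQmonic : Q.Monic) (hQdeg : Q.natDegree = n - 1)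
    (hQroots : Q.roots.card = n - 1) (hQnodup : Q.roots.Nodup)
    (c₀ : ℝ) (hc₀ : Q.eval c₀ ≠ 0)
    (P : Polynomial ℝ) (hPdef : P = (X - C c₀) * Q)
    (ξ₀ : ℝ) (hξ₀ : (Polynomial.derivative P).eval ξ₀ = 0)
    (f : ℝ → ℝ) (hf : DifferentiableAt ℝ f c₀) (hfc₀ : f c₀ = ξ₀)
    (hftrack : ∀ᶠ c in nhds c₀,
      (Polynomial.derivative ((X - C c) * Q)).eval (f c) = 0) :
    (Polynomial.derivative (Polynomial.derivative P)).eval ξ₀ ≠ 0 ∧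
    ξ₀ ≠ c₀ ∧
    deriv f c₀ = (Polynomial.derivative Q).eval ξ₀ /
      (Polynomial.derivative (Polynomial.derivative P)).eval ξ₀ ∧
    deriv f c₀ = -P.eval ξ₀ /
      ((ξ₀ - c₀) ^ 2 * (Polynomial.derivative (Polynomial.derivative P)).eval ξ₀) ∧
    0 < deriv f c₀ :=
  deriv_of_root_of_derivative_wrt_simple_root_general n Q hQdeg hQroots hQnodup c₀ hc₀ P hPdef ξ₀
    hξ₀ f hf hfc₀ hftrack
end

section
/- Let P and P̃ be monic strictly hyperbolic real polynomials of degree n with roots x₁ < … < xₙ and x̃₁ < … < x̃ₙ respectively. Suppose x_i ≤ x̃_i for all i, and x_{i₀} < x̃_{i₀} for at least one index i₀. Then for every k with 1 ≤ k ≤ n−1 and every j with 1 ≤ j ≤ n−k, the j-th roots in increasing order ξ_j of P^{(k)} and ξ̃_j of P̃^{(k)} satisfy ξ_j < ξ̃_j. -/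
/-!
Induction on `k`. By Rolle's theorem `P'` has a root strictly between any two consecutive roots
of `P`; counting degrees, these are all its roots, so the roots `ξ` of `P'` interlace those of `P`,
`x j < ξ j < x (j + 1)`, and `P'` is a nonzero multiple of `∏ (X - ξ j)`. The step from `k` to
`k + 1` is therefore the case `k = 1` applied to `P`, followed by the case `k` applied to `P'`.

For `k = 1`, suppose `η j ≤ ξ j`. At `t = ξ j` the logarithmic derivative `∑ i, (t - x i)⁻¹` of
`P` vanishes. Then `t` lies between `y j` and `y (j + 1)` as well, so `t - x i` and `t - y i` have
the same sign for every `i`, and `x ≤ y` with one strict inequality gives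
`∑ i, (t - y i)⁻¹ > 0`. But this function of `t` is strictly decreasing on `(y j, y (j + 1))` and
vanishes at `η j ≤ t`, a contradiction.
-/

open Polynomial Finset

namespace Polynomial

theorem eval_derivative_prod_X_sub_C {K ι : Type*} [Field K] (s : Finset ι) (x : ι → K)
    {t : K} (ht : ∀ i ∈ s, t ≠ x i) :
    eval t (derivative (∏ i ∈ s, (X - C (x i)))) =
      eval t (∏ i ∈ s, (X - C (x i))) * ∑ i ∈ s, (t - x i)⁻¹ := by
  classical
  simp only [derivative_prod_finset, derivative_sub, derivative_X, derivative_C, sub_zero,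
    mul_one, eval_finsetSum, eval_prod, eval_sub, eval_X, eval_C, Finset.mul_sum]
  refine Finset.sum_congr rfl fun i hi => ?_
  rw [← Finset.mul_prod_erase s _ hi, mul_comm (t - x i), mul_assoc,
    mul_inv_cancel₀ (sub_ne_zero.2 (ht i hi)), mul_one]

theorem isRoot_C_mul_prod_X_sub_C {R ι : Type*} [CommRing R] [Fintype ι] (c : R) (x : ι → R)
    (i : ι) : (C c * ∏ j, (X - C (x j))).IsRoot (x i) := by
  rw [IsRoot, eval_mul, eval_prod]
  exact mul_eq_zero_of_right _ (prod_eq_zero (mem_univ i) (by simp))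

theorem exists_isRoot_derivative_mem_Ioo {p : ℝ[X]} {a b : ℝ} (hab : a < b) (ha : p.IsRoot a)
    (hb : p.IsRoot b) : ∃ c ∈ Set.Ioo a b, (derivative p).IsRoot c := by
  obtain ⟨c, hc, hc'⟩ := exists_deriv_eq_zero hab p.continuousOn (ha.trans hb.symm)
  exact ⟨c, hc, by rwa [IsRoot, ← p.deriv]⟩

theorem isRoot_iterate_derivative_succ_iff {R : Type*} [CommRing R] [NoZeroDivisors R]
    {p q : R[X]} {c : R} (hc : c ≠ 0) (h : derivative p = C c * q) (k : ℕ) (t : R) :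
    (derivative^[k + 1] p).IsRoot t ↔ (derivative^[k] q).IsRoot t := by
  rw [Function.iterate_succ_apply, h, iterate_derivative_C_mul, IsRoot, eval_mul, eval_C,
    mul_eq_zero, or_iff_right hc, IsRoot]

end Polynomial

theorem StrictMono.eq_of_range_subset {α : Type*} [LinearOrder α] {m : ℕ} {f g : Fin m → α}
    (hf : StrictMono f) (hg : StrictMono g) (h : Set.range f ⊆ Set.range g) : f = g := by
  refine (hf.range_inj hg).1 (Set.eq_of_subset_of_ncard_le h ?_)
  rw [Set.ncard_range_of_injective hf.injective, Set.ncard_range_of_injective hg.injective]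

def Interlaces {α : Type*} [Preorder α] {m : ℕ} (ξ : Fin m → α) (x : Fin (m + 1) → α) : Prop :=
  ∀ j, ξ j ∈ Set.Ioo (x j.castSucc) (x j.succ)

section Interlacing

variable {α : Type*} [Preorder α] {m : ℕ} {x : Fin (m + 1) → α}

theorem Interlaces.strictMono {ξ : Fin m → α} (h : Interlaces ξ x) (hx : Monotone x) :
    StrictMono ξ := fun a b hab =>
  ((h a).2.trans_le (hx (Fin.succ_le_castSucc_iff.2 hab))).trans (h b).1

variable {j : Fin m} {t : α}

theorem Monotone.lt_of_mem_Ioo_of_le_castSucc (hx : Monotone x)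
    (ht : t ∈ Set.Ioo (x j.castSucc) (x j.succ)) {i : Fin (m + 1)} (hi : i ≤ j.castSucc) :
    x i < t :=
  (hx hi).trans_lt ht.1

theorem Monotone.lt_of_mem_Ioo_of_castSucc_lt (hx : Monotone x)
    (ht : t ∈ Set.Ioo (x j.castSucc) (x j.succ)) {i : Fin (m + 1)} (hi : j.castSucc < i) :
    t < x i :=
  ht.2.trans_le (hx (Fin.castSucc_lt_iff_succ_le.1 hi))

end Interlacing

section LogarithmicDerivative

variable {K : Type*} [Field K] [LinearOrder K] [IsStrictOrderedRing K]

theorem inv_lt_inv_of_lt_of_pos_or_neg {a b : K} (hab : a < b) (h : 0 < a ∨ b < 0) :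
    b⁻¹ < a⁻¹ := by
  rcases h with ha | hb
  · exact inv_strictAnti₀ ha hab
  · exact (inv_lt_inv_of_neg hb (hab.trans hb)).2 hab

variable {m : ℕ} {x y : Fin (m + 1) → K}

theorem strictAntiOn_sum_inv_sub (hx : Monotone x) (j : Fin m) :
    StrictAntiOn (fun t => ∑ i, (t - x i)⁻¹) (Set.Ioo (x j.castSucc) (x j.succ)) := by
  intro t ht t' ht' htt'
  refine Finset.sum_lt_sum_of_nonempty univ_nonempty fun i _ => ?_
  refine inv_lt_inv_of_lt_of_pos_or_neg (sub_lt_sub_right htt' _) ?_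
  rcases le_or_gt i j.castSucc with hi | hi
  · exact .inl (sub_pos.2 (hx.lt_of_mem_Ioo_of_le_castSucc ht hi))
  · exact .inr (sub_neg.2 (hx.lt_of_mem_Ioo_of_castSucc_lt ht' hi))

theorem sum_inv_sub_lt_sum_inv_sub (hx : Monotone x) (hy : Monotone y) (hle : ∀ i, x i ≤ y i)
    (hlt : ∃ i, x i < y i) {j : Fin m} {t : K} (htx : t ∈ Set.Ioo (x j.castSucc) (x j.succ))
    (hty : t ∈ Set.Ioo (y j.castSucc) (y j.succ)) :
    ∑ i, (t - x i)⁻¹ < ∑ i, (t - y i)⁻¹ := by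
  have hterm : ∀ i, x i < y i → (t - x i)⁻¹ < (t - y i)⁻¹ := fun i hi => by
    refine inv_lt_inv_of_lt_of_pos_or_neg (sub_lt_sub_left hi t) ?_
    rcases le_or_gt i j.castSucc with hij | hij
    · exact .inl (sub_pos.2 (hy.lt_of_mem_Ioo_of_le_castSucc hty hij))
    · exact .inr (sub_neg.2 (hx.lt_of_mem_Ioo_of_castSucc_lt htx hij))
  obtain ⟨i₀, hi₀⟩ := hlt
  refine Finset.sum_lt_sum (fun i _ => ?_) ⟨i₀, mem_univ _, hterm i₀ hi₀⟩
  rcases (hle i).lt_or_eq with hi | hi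
  · exact (hterm i hi).le
  · rw [hi]

theorem sum_inv_sub_eq_zero_of_isRoot_derivative (hx : Monotone x) {j : Fin m} {t : K}
    (ht : t ∈ Set.Ioo (x j.castSucc) (x j.succ))
    (hroot : (derivative (∏ i, (X - C (x i)))).IsRoot t) :
    ∑ i, (t - x i)⁻¹ = 0 := by
  have hne : ∀ i ∈ univ, t ≠ x i := fun i _ => by
    rcases le_or_gt i j.castSucc with hi | hi
    · exact (hx.lt_of_mem_Ioo_of_le_castSucc ht hi).ne'
    · exact (hx.lt_of_mem_Ioo_of_castSucc_lt ht hi).ne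
  have hPt : eval t (∏ i, (X - C (x i))) ≠ 0 := by
    simpa [eval_prod, Finset.prod_eq_zero_iff, sub_eq_zero] using hne
  have hP't := hroot.eq_zero
  rw [eval_derivative_prod_X_sub_C univ x hne] at hP't
  exact (mul_eq_zero.1 hP't).resolve_left hPt

end LogarithmicDerivative

section Real

variable {m : ℕ} {x y : Fin (m + 1) → ℝ}

theorem exists_interlaces_and_derivative_prod_X_sub_C_eq (hx : StrictMono x) :
    ∃ ξ : Fin m → ℝ, Interlaces ξ x ∧
      ∃ c ≠ 0, derivative (∏ i, (X - C (x i))) = C c * ∏ j, (X - C (ξ j)) := by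
  set P := ∏ i, (X - C (x i))
  have hPx : ∀ i, P.IsRoot (x i) := fun i =>
    (isRoot_prod _ _ _).2 ⟨i, mem_univ i, root_X_sub_C.2 rfl⟩
  have hroots : ∀ j : Fin m, ∃ t ∈ Set.Ioo (x j.castSucc) (x j.succ), (derivative P).IsRoot t :=
    fun j => exists_isRoot_derivative_mem_Ioo (hx j.castSucc_lt_succ) (hPx _) (hPx _)
  choose ξ hξ hroot using hroots
  have hdvd : ∏ j, (X - C (ξ j)) ∣ derivative P :=
    Fintype.prod_dvd_of_coprime
      (pairwise_coprime_X_sub_C (Interlaces.strictMono hξ hx.monotone).injective)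
      fun j => dvd_iff_isRoot.2 (hroot j)
  have hdeg : (derivative P).natDegree ≤ (∏ j, (X - C (ξ j))).natDegree := by
    refine (natDegree_derivative_le P).trans ?_
    simp [P]
  have hP' : derivative P ≠ 0 := by
    simp [P, derivative_eq_zero]
  exact ⟨ξ, hξ, _, leadingCoeff_ne_zero.2 hP',
    eq_leadingCoeff_mul_of_monic_of_dvd_of_natDegree_le
      (monic_prod_of_monic _ _ fun j _ => monic_X_sub_C (ξ j)) hdvd hdeg⟩

theorem interlaces_of_isRoot_derivative (hx : StrictMono x) {ξ : Fin m → ℝ} (hξ : StrictMono ξ)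
    (hroot : ∀ j, (derivative (∏ i, (X - C (x i)))).IsRoot (ξ j)) : Interlaces ξ x := by
  obtain ⟨r, hr, c, hc, hP'⟩ := exists_interlaces_and_derivative_prod_X_sub_C_eq hx
  suffices ξ = r by rwa [this]
  refine hξ.eq_of_range_subset (hr.strictMono hx.monotone) ?_
  rintro _ ⟨j, rfl⟩
  have := hroot j
  rw [hP', IsRoot, eval_mul, eval_C, eval_prod] at this
  obtain ⟨i, -, hi⟩ := Finset.prod_eq_zero_iff.1 ((mul_eq_zero.1 this).resolve_left hc)
  rw [eval_sub, eval_X, eval_C, sub_eq_zero] at hi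
  exact ⟨i, hi.symm⟩

theorem roots_derivative_lt_of_roots_le (hx : StrictMono x) (hy : StrictMono y)
    (hle : ∀ i, x i ≤ y i) (hlt : ∃ i, x i < y i) {ξ η : Fin m → ℝ} (hξ : StrictMono ξ)
    (hη : StrictMono η) (hξroot : ∀ j, (derivative (∏ i, (X - C (x i)))).IsRoot (ξ j))
    (hηroot : ∀ j, (derivative (∏ i, (X - C (y i)))).IsRoot (η j)) (j : Fin m) :
    ξ j < η j := by
  have hξx := interlaces_of_isRoot_derivative hx hξ hξroot j
  have hηy := interlaces_of_isRoot_derivative hy hη hηroot j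
  by_contra! hηξ
  have hξy : ξ j ∈ Set.Ioo (y j.castSucc) (y j.succ) :=
    ⟨hηy.1.trans_le hηξ, hξx.2.trans_le (hle _)⟩
  refine lt_irrefl (0 : ℝ) ?_
  calc (0 : ℝ) = ∑ i, (ξ j - x i)⁻¹ :=
        (sum_inv_sub_eq_zero_of_isRoot_derivative hx.monotone hξx (hξroot j)).symm
    _ < ∑ i, (ξ j - y i)⁻¹ := sum_inv_sub_lt_sum_inv_sub hx.monotone hy.monotone hle hlt hξx hξy
    _ ≤ ∑ i, (η j - y i)⁻¹ := (strictAntiOn_sum_inv_sub hy.monotone j).antitoneOn hηy hξy hηξ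
    _ = 0 := sum_inv_sub_eq_zero_of_isRoot_derivative hy.monotone hηy (hηroot j)

end Real

theorem roots_iterate_derivative_lt_of_roots_le (k : ℕ) {m : ℕ} {x y : Fin (m + k + 1) → ℝ}
    (hx : StrictMono x) (hy : StrictMono y) (hle : ∀ i, x i ≤ y i) (hlt : ∃ i, x i < y i)
    {ξ η : Fin m → ℝ} (hξ : StrictMono ξ) (hη : StrictMono η)
    (hξroot : ∀ j, (derivative^[k + 1] (∏ i, (X - C (x i)))).IsRoot (ξ j))
    (hηroot : ∀ j, (derivative^[k + 1] (∏ i, (X - C (y i)))).IsRoot (η j)) (j : Fin m) :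
    ξ j < η j := by
  induction k with
  | zero => exact roots_derivative_lt_of_roots_le hx hy hle hlt hξ hη hξroot hηroot j
  | succ k ih =>
    obtain ⟨r, hr, c, hc, hPr⟩ := exists_interlaces_and_derivative_prod_X_sub_C_eq hx
    obtain ⟨s, hs, d, hd, hQs⟩ := exists_interlaces_and_derivative_prod_X_sub_C_eq hy
    have hrs : ∀ i, r i < s i :=
      roots_derivative_lt_of_roots_le hx hy hle hlt (hr.strictMono hx.monotone)
        (hs.strictMono hy.monotone) (fun i => hPr ▸ isRoot_C_mul_prod_X_sub_C c r i)
        (fun i => hQs ▸ isRoot_C_mul_prod_X_sub_C d s i)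
    exact ih (hr.strictMono hx.monotone) (hs.strictMono hy.monotone) (fun i => (hrs i).le)
      ⟨0, hrs 0⟩ (fun i => (isRoot_iterate_derivative_succ_iff hc hPr _ _).1 (hξroot i))
      (fun i => (isRoot_iterate_derivative_succ_iff hd hQs _ _).1 (hηroot i))

/-- Strict monotone dependence of the roots of `P^{(k)}` on the roots of `P`:
if `P` and `Q` are monic strictly hyperbolic real polynomials of degree `n` with
roots `x 0 < … < x (n-1)` and `y 0 < … < y (n-1)` satisfying `x i ≤ y i` for
all `i` with at least one strict inequality, then for every `1 ≤ k ≤ n - 1` the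
increasingly ordered roots `ξ` of `P^{(k)}` and `η` of `Q^{(k)}` satisfy
`ξ j < η j` for all `j`. -/
theorem roots_of_derivative_strictly_monotone_in_roots
    (n : ℕ) (x y : Fin n → ℝ) (hx : StrictMono x) (hy : StrictMono y)
    (P Q : Polynomial ℝ)
    (hP : P = ∏ i, (X - C (x i))) (hQ : Q = ∏ i, (X - C (y i)))
    (hle : ∀ i, x i ≤ y i) (hlt : ∃ i₀, x i₀ < y i₀) :
    ∀ k : ℕ, 1 ≤ k → k ≤ n - 1 →
      ∀ ξ η : Fin (n - k) → ℝ, StrictMono ξ → StrictMono η →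
        Polynomial.derivative^[k] P =
          C ((Polynomial.derivative^[k] P).leadingCoeff) * ∏ i, (X - C (ξ i)) →
        Polynomial.derivative^[k] Q =
          C ((Polynomial.derivative^[k] Q).leadingCoeff) * ∏ i, (X - C (η i)) →
        ∀ j : Fin (n - k), ξ j < η j := by
  subst hP hQ
  intro k hk hkn
  obtain ⟨k, rfl⟩ := Nat.exists_eq_add_of_le' hk
  obtain ⟨m, rfl⟩ : ∃ m, n = m + (k + 1) := ⟨n - (k + 1), by omega⟩
  rw [Nat.add_sub_cancel]
  intro ξ η hξ hη hPξ hQη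
  exact roots_iterate_derivative_lt_of_roots_le k hx hy hle hlt hξ hη
    (fun j => hPξ ▸ isRoot_C_mul_prod_X_sub_C _ ξ j)
    (fun j => hQη ▸ isRoot_C_mul_prod_X_sub_C _ η j)
end

section
/- Let s ≥ 1, let Q be a monic hyperbolic real polynomial, let c₀ ∈ ℝ with Q(c₀) ≠ 0, and set P := (X − c₀)^s·Q, a hyperbolic polynomial. Let ξ₀ ∈ ℝ with ξ₀ ≠ c₀ be a simple root of P', i.e. P'(ξ₀) = 0 and P''(ξ₀) ≠ 0. Suppose f : ℝ → ℝ is differentiable at c₀, f(c₀) = ξ₀, and for all c in some neighborhood of c₀ the polynomial ((X − c)^s·Q)' vanishes at f(c). Then f'(c₀) = −s·P(ξ₀)/((ξ₀ − c₀)²·P''(ξ₀)); moreover f'(c₀) ≥ 0, and f'(c₀) = 0 if and only if P(ξ₀) = 0. -/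
/-!
Write `R_c = (X - c)^s Q`. Away from `x = c`, `R_c'(x) = 0` is equivalent to the vanishing of
`T_c(x) = s Q(x) + (x - c) Q'(x)`, since `(X - c) R_c' = (X - c)^s T_c`. Differentiating
`T_c(f c) = 0` at `c₀` gives `f'(c₀) T'_{c₀}(ξ₀) = Q'(ξ₀)`, and differentiating the identity once
more gives `(ξ₀ - c₀) P''(ξ₀) = (ξ₀ - c₀)^s T'_{c₀}(ξ₀)`; together with `T_{c₀}(ξ₀) = 0` this is the
formula for `f'(c₀)`. Its sign comes from Laguerre's inequality `P P'' ≤ P'^2` for split `P`,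
evaluated at the critical point `ξ₀`.
-/

open Polynomial Filter Topology

namespace Polynomial

section Laguerre

variable {R : Type*} [CommRing R] [LinearOrder R] [IsStrictOrderedRing R]

theorem eval_mul_eval_derivative_derivative_le_sq_mul {p q : R[X]} {x : R}
    (hp : p.eval x * (derivative (derivative p)).eval x ≤ ((derivative p).eval x) ^ 2)
    (hq : q.eval x * (derivative (derivative q)).eval x ≤ ((derivative q).eval x) ^ 2) :
    (p * q).eval x * (derivative (derivative (p * q))).eval x ≤
      ((derivative (p * q)).eval x) ^ 2 := by
  simp only [derivative_mul, derivative_add, eval_add, eval_mul]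
  nlinarith [mul_le_mul_of_nonneg_left hp (sq_nonneg (q.eval x)),
    mul_le_mul_of_nonneg_left hq (sq_nonneg (p.eval x))]

theorem Splits.eval_mul_eval_derivative_derivative_le_sq {p : R[X]} (hp : p.Splits) (x : R) :
    p.eval x * (derivative (derivative p)).eval x ≤ ((derivative p).eval x) ^ 2 := by
  induction hp using Submonoid.closure_induction with
  | mem p hp => rcases hp with ⟨a, rfl⟩ | ⟨a, rfl⟩ <;> simp
  | one => simp
  | mul p q _ _ hp hq => exact eval_mul_eval_derivative_derivative_le_sq_mul hp hq

end Laguerre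

section Cofactor

/-- `T_c`, the cofactor in `((X - c)^s Q)' = (X - c)^(s - 1) T_c`. -/
noncomputable def derivCofactor {R : Type*} [CommRing R] (s : ℕ) (Q : R[X]) (c : R) : R[X] :=
  C (s : R) * Q + (X - C c) * derivative Q

theorem X_sub_C_mul_derivative_X_sub_C_pow_mul {R : Type*} [CommRing R] (s : ℕ) (Q : R[X])
    (c : R) : (X - C c) * derivative ((X - C c) ^ s * Q) = (X - C c) ^ s * derivCofactor s Q c := by
  cases s with
  | zero => simp [derivCofactor]
  | succ s => simp [derivCofactor, derivative_mul, derivative_pow]; ring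

variable {K : Type*} [Field K] {s : ℕ} {Q : K[X]} {c x : K}

theorem eval_derivCofactor_eq_zero (hx : x ≠ c)
    (h : (derivative ((X - C c) ^ s * Q)).eval x = 0) : (derivCofactor s Q c).eval x = 0 := by
  have := congrArg (eval x) (X_sub_C_mul_derivative_X_sub_C_pow_mul s Q c)
  simp only [eval_mul, eval_pow, eval_sub, eval_X, eval_C, h, mul_zero] at this
  exact (mul_eq_zero.mp this.symm).resolve_left (pow_ne_zero _ (sub_ne_zero.mpr hx))

theorem sub_mul_eval_derivative_derivative_X_sub_C_pow_mul (hx : x ≠ c)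
    (h : (derivative ((X - C c) ^ s * Q)).eval x = 0) :
    (x - c) * (derivative (derivative ((X - C c) ^ s * Q))).eval x =
      (x - c) ^ s * (derivative (derivCofactor s Q c)).eval x := by
  have hT := eval_derivCofactor_eq_zero hx h
  have key := X_sub_C_mul_derivative_X_sub_C_pow_mul s Q c
  generalize derivative ((X - C c) ^ s * Q) = R at h key ⊢
  simpa [derivative_mul, h, hT] using congrArg (fun p => (derivative p).eval x) key

end Cofactor

section Tracking

variable {𝕜 : Type*} [NontriviallyNormedField 𝕜] {s : ℕ} {Q : 𝕜[X]} {f : 𝕜 → 𝕜} {d c₀ : 𝕜}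

theorem hasDerivAt_eval_derivCofactor (hf : HasDerivAt f d c₀) :
    HasDerivAt (fun c => (derivCofactor s Q c).eval (f c))
      (d * (derivative (derivCofactor s Q c₀)).eval (f c₀) - (derivative Q).eval (f c₀)) c₀ := by
  have h : HasDerivAt (fun c => s * Q.eval (f c) + (f c - c) * (derivative Q).eval (f c))
      (s * ((derivative Q).eval (f c₀) * d) +
        ((d - 1) * (derivative Q).eval (f c₀) +
          (f c₀ - c₀) * ((derivative (derivative Q)).eval (f c₀) * d))) c₀ :=
    (((Q.hasDerivAt (f c₀)).comp c₀ hf).const_mul _).fun_add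
      ((hf.fun_sub (hasDerivAt_id' c₀)).fun_mul ((derivative Q).hasDerivAt (f c₀) |>.comp c₀ hf))
  convert h using 1
  · simp [derivCofactor]
  · simp [derivCofactor, derivative_mul]; ring

theorem HasDerivAt.mul_eval_derivative_derivative_eq_of_eventually_root {ξ₀ : 𝕜}
    (hf : HasDerivAt f d c₀) (hfc₀ : f c₀ = ξ₀) (hξc : ξ₀ ≠ c₀)
    (hftrack : ∀ᶠ c in 𝓝 c₀, (derivative ((X - C c) ^ s * Q)).eval (f c) = 0) :
    d * ((ξ₀ - c₀) ^ 2 * (derivative (derivative ((X - C c₀) ^ s * Q))).eval ξ₀) =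
      -s * ((X - C c₀) ^ s * Q).eval ξ₀ := by
  have hne : ∀ᶠ c in 𝓝 c₀, f c ≠ c :=
    ((hf.continuousAt.sub continuousAt_id).eventually_ne (sub_ne_zero.mpr (hfc₀ ▸ hξc))).mono
      fun c hc => sub_ne_zero.mp hc
  have hT : ∀ᶠ c in 𝓝 c₀, (derivCofactor s Q c).eval (f c) = 0 :=
    (hftrack.and hne).mono fun c ⟨h, hc⟩ => eval_derivCofactor_eq_zero hc h
  have himplicit := (hasDerivAt_eval_derivCofactor hf).unique
    ((hasDerivAt_const c₀ 0).congr_of_eventuallyEq hT)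
  have hξ₀ := hftrack.self_of_nhds
  rw [hfc₀] at himplicit hξ₀
  have hT₀ := eval_derivCofactor_eq_zero hξc hξ₀
  have hP₂ := sub_mul_eval_derivative_derivative_X_sub_C_pow_mul hξc hξ₀
  simp only [derivCofactor, eval_add, eval_mul, eval_C, eval_sub, eval_X] at hT₀
  simp only [eval_mul, eval_pow, eval_sub, eval_X, eval_C]
  linear_combination (ξ₀ - c₀) * d * hP₂ + (ξ₀ - c₀) ^ (s + 1) * himplicit + (ξ₀ - c₀) ^ s * hT₀

end Tracking

end Polynomial

theorem deriv_of_root_of_derivative_wrt_multiple_root_general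
    (s : ℕ) (hs : 1 ≤ s) (Q : Polynomial ℝ)
    (hQsplit : (Q.map (RingHom.id ℝ)).Splits)
    (c₀ : ℝ)
    (P : Polynomial ℝ) (hPdef : P = (X - C c₀) ^ s * Q)
    (ξ₀ : ℝ) (hξc : ξ₀ ≠ c₀)
    (hξ₀ : (Polynomial.derivative P).eval ξ₀ = 0)
    (hsimple : (Polynomial.derivative (Polynomial.derivative P)).eval ξ₀ ≠ 0)
    (f : ℝ → ℝ) (hf : DifferentiableAt ℝ f c₀) (hfc₀ : f c₀ = ξ₀)
    (hftrack : ∀ᶠ c in nhds c₀,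
      (Polynomial.derivative ((X - C c) ^ s * Q)).eval (f c) = 0) :
    deriv f c₀ = -(s : ℝ) * P.eval ξ₀ /
      ((ξ₀ - c₀) ^ 2 * (Polynomial.derivative (Polynomial.derivative P)).eval ξ₀) ∧
    0 ≤ deriv f c₀ ∧
    (deriv f c₀ = 0 ↔ P.eval ξ₀ = 0) := by
  set p₂ := (derivative (derivative P)).eval ξ₀
  have hden : (ξ₀ - c₀) ^ 2 * p₂ ≠ 0 := mul_ne_zero (pow_ne_zero 2 (sub_ne_zero.mpr hξc)) hsimple
  have hmul : deriv f c₀ * ((ξ₀ - c₀) ^ 2 * p₂) = -s * P.eval ξ₀ := by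
    subst hPdef
    exact hf.hasDerivAt.mul_eval_derivative_derivative_eq_of_eventually_root hfc₀ hξc hftrack
  have hsplit : P.Splits := hPdef ▸ ((Splits.X_sub_C c₀).pow s).mul (by simpa using hQsplit)
  have hlaguerre : P.eval ξ₀ * p₂ ≤ 0 := by
    simpa [hξ₀] using hsplit.eval_mul_eval_derivative_derivative_le_sq ξ₀
  refine ⟨eq_div_of_mul_eq hden hmul, ?_, ?_⟩
  · refine nonneg_of_mul_nonneg_left (b := (ξ₀ - c₀) ^ 2 * p₂ ^ 2) ?_ (by positivity)
    calc 0 ≤ -s * (P.eval ξ₀ * p₂) := mul_nonneg_of_nonpos_of_nonpos (by simp) hlaguerre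
      _ = _ := by linear_combination -p₂ * hmul
  · rw [← mul_eq_zero_iff_right hden, hmul]
    simp [Nat.one_le_iff_ne_zero.mp hs]

/-- Let `Q` be a monic hyperbolic real polynomial, `s ≥ 1`, `c₀` not a root of `Q`,
and `P := (X - c₀)^s * Q` (a hyperbolic polynomial). Let `ξ₀ ≠ c₀` be a simple root
of `P'` (`P'(ξ₀) = 0`, `P''(ξ₀) ≠ 0`). If `f` is differentiable at `c₀`,
`f c₀ = ξ₀`, and `f` tracks a root of the derivative of `(X - c)^s * Q` as `c`
varies near `c₀`, then `f'(c₀) = -s·P(ξ₀)/((ξ₀ - c₀)² P''(ξ₀))`; moreover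
`f'(c₀) ≥ 0`, with `f'(c₀) = 0` if and only if `P(ξ₀) = 0`. -/
theorem deriv_of_root_of_derivative_wrt_multiple_root
    (s : ℕ) (hs : 1 ≤ s) (Q : Polynomial ℝ)
    (hQmonic : Q.Monic) (hQroots : Q.roots.card = Q.natDegree)
    (hQsplit : (Q.map (RingHom.id ℝ)).Splits)
    (c₀ : ℝ) (hc₀ : Q.eval c₀ ≠ 0)
    (P : Polynomial ℝ) (hPdef : P = (X - C c₀) ^ s * Q)
    (ξ₀ : ℝ) (hξc : ξ₀ ≠ c₀)
    (hξ₀ : (Polynomial.derivative P).eval ξ₀ = 0)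
    (hsimple : (Polynomial.derivative (Polynomial.derivative P)).eval ξ₀ ≠ 0)
    (f : ℝ → ℝ) (hf : DifferentiableAt ℝ f c₀) (hfc₀ : f c₀ = ξ₀)
    (hftrack : ∀ᶠ c in nhds c₀,
      (Polynomial.derivative ((X - C c) ^ s * Q)).eval (f c) = 0) :
    deriv f c₀ = -(s : ℝ) * P.eval ξ₀ /
      ((ξ₀ - c₀) ^ 2 * (Polynomial.derivative (Polynomial.derivative P)).eval ξ₀) ∧
    0 ≤ deriv f c₀ ∧
    (deriv f c₀ = 0 ↔ P.eval ξ₀ = 0) :=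
  deriv_of_root_of_derivative_wrt_multiple_root_general s hs Q hQsplit c₀ P hPdef ξ₀ hξc hξ₀ hsimple
    f hf hfc₀ hftrack
end
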